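/- arXiv:2210.08387 — 2 statements merged into one kernel-verified Lean document; each statement's English description precedes it below -/
import Mathlib

section
/- Suppose the solution curve t ↦ X_t of a time-varying SDP is continuously differentiable with ‖Ẋ_t‖_F ≤ L and smallest nonzero eigenvalue λ_r(X_t) ≥ λ* > 0 for all t, and X_t = Y_t Y_tᵀ with Y_t of rank r. Then for Δt < 2λ*/(L(√(r+4)+√r)), for every s ∈ [t, t+Δt] the matrix X_s lies in the image of the horizontal ball Y_t + B_{Y_t} under the map Z ↦ Z Zᵀ, where B_{Y_t} = {H ∈ H_{Y_t} : ‖H‖_F < σ_r(Y_t)}. -/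
open Matrix BigOperators

/-- Frobenius norm of a real matrix. -/
noncomputable def frobNorm {n r : ℕ} (A : Matrix (Fin n) (Fin r) ℝ) : ℝ :=
  Real.sqrt (∑ i, ∑ j, (A i j) ^ 2)

/-- Smallest singular value of a real `n × r` matrix: the infimum of `‖Y x‖`
over Euclidean unit vectors `x`. -/
noncomputable def sigmaMin {n r : ℕ} (Y : Matrix (Fin n) (Fin r) ℝ) : ℝ :=
  sInf {c | ∃ x : Fin r → ℝ, (∑ j, (x j) ^ 2) = 1 ∧
    c = Real.sqrt (∑ i, (Y.mulVec x i) ^ 2)}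

attribute [local instance] Matrix.frobeniusNormedAddCommGroup Matrix.frobeniusNormedSpace

namespace TIHB

noncomputable def fsq {m k : Type*} [Fintype m] [Fintype k] (A : Matrix m k ℝ) : ℝ :=
  ∑ i, ∑ j, (A i j) ^ 2

lemma fsq_nonneg {m k : Type*} [Fintype m] [Fintype k] (A : Matrix m k ℝ) : 0 ≤ fsq A := by
  apply Finset.sum_nonneg; intros; apply Finset.sum_nonneg; intros; positivity

lemma fsq_eq_trace {m k : Type*} [Fintype m] [Fintype k] (A : Matrix m k ℝ) :
    fsq A = Matrix.trace (Aᵀ * A) := by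
  unfold fsq Matrix.trace
  rw [Finset.sum_comm]
  simp [Matrix.diag, Matrix.mul_apply, sq]

lemma fsq_neg {m k : Type*} [Fintype m] [Fintype k] (A : Matrix m k ℝ) : fsq (-A) = fsq A := by
  simp [fsq]

lemma trace_transpose_mul {m k : Type*} [Fintype m] [Fintype k]
    (A B : Matrix m k ℝ) : Matrix.trace (Aᵀ * B) = Matrix.trace (Bᵀ * A) := by
  rw [← Matrix.trace_transpose (Bᵀ * A), Matrix.transpose_mul, Matrix.transpose_transpose]

lemma fsq_sub_expand {m k : Type*} [Fintype m] [Fintype k] (A B : Matrix m k ℝ) :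
    fsq (A - B) = fsq A - 2 * Matrix.trace (Aᵀ * B) + fsq B := by
  rw [fsq_eq_trace, fsq_eq_trace, fsq_eq_trace, Matrix.transpose_sub, Matrix.sub_mul,
    Matrix.mul_sub, Matrix.mul_sub, Matrix.trace_sub, Matrix.trace_sub, Matrix.trace_sub,
    trace_transpose_mul B A]
  ring

lemma fsq_add_expand {m k : Type*} [Fintype m] [Fintype k] (A B : Matrix m k ℝ) :
    fsq (A + B) = fsq A + 2 * Matrix.trace (Aᵀ * B) + fsq B := by
  have := fsq_sub_expand A (-B)
  simp only [sub_neg_eq_add, Matrix.mul_neg, Matrix.trace_neg, fsq_neg] at this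
  linarith

lemma fsq_add_le {m k : Type*} [Fintype m] [Fintype k] (A B : Matrix m k ℝ) :
    fsq (A + B) ≤ 2 * fsq A + 2 * fsq B := by
  have h1 := fsq_sub_expand A B
  have h2 := fsq_add_expand A B
  have h3 := fsq_nonneg (A - B)
  linarith

lemma trace_mul_psd_nonneg {m k : Type*} [Fintype m] [Fintype k] [DecidableEq k]
    (B : Matrix m k ℝ) (C : Matrix k k ℝ) (hC : C.PosSemidef) :
    0 ≤ Matrix.trace ((Bᵀ * B) * C) := by
  obtain ⟨D, hD⟩ : ∃ D : Matrix k k ℝ, C = Dᴴ * D := by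
    open MatrixOrder in
    exact ⟨CFC.sqrt C, by
      rw [(CFC.sqrt_nonneg C).posSemidef.1.eq, CFC.sqrt_mul_sqrt_self C hC.nonneg]⟩
  have hD' : C = Dᵀ * D := by
    rw [hD, Matrix.conjTranspose_eq_transpose_of_trivial]
  rw [hD']
  have : Matrix.trace ((Bᵀ * B) * (Dᵀ * D)) = Matrix.trace ((B * Dᵀ)ᵀ * (B * Dᵀ)) := by
    rw [Matrix.transpose_mul, Matrix.transpose_transpose, ← Matrix.mul_assoc,
      Matrix.trace_mul_comm ((Bᵀ * B) * Dᵀ) D]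
    simp only [Matrix.mul_assoc]
  rw [this, ← fsq_eq_trace]
  exact fsq_nonneg _

lemma key_identity {n r : ℕ} (Y Z : Matrix (Fin n) (Fin r) ℝ) (hZY : Zᵀ * Y = Yᵀ * Z) :
    fsq (Z * Zᵀ - Y * Yᵀ) =
      2 * Matrix.trace (((Z - Y)ᵀ * (Z - Y)) * (Yᵀ * Z))
      + fsq (Yᵀ * Z - Yᵀ * Y) + fsq (Yᵀ * Z - Zᵀ * Z) := by
  have hP : (Z - Y)ᵀ * (Z - Y) = Zᵀ * Z + Yᵀ * Y - Yᵀ * Z - Yᵀ * Z := by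
    rw [Matrix.transpose_sub, Matrix.sub_mul, Matrix.mul_sub, Matrix.mul_sub, hZY]; abel
  rw [fsq_sub_expand, fsq_sub_expand, fsq_sub_expand, hP]
  rw [Matrix.sub_mul, Matrix.sub_mul, Matrix.add_mul, Matrix.trace_sub, Matrix.trace_sub,
    Matrix.trace_add]
  simp only [fsq_eq_trace, Matrix.transpose_mul, Matrix.transpose_transpose, hZY,
    Matrix.mul_assoc]
  have rot : ∀ {m k : Type} [Fintype m] [Fintype k]
      (A : Matrix m k ℝ) (B : Matrix k m ℝ),
      Matrix.trace (A * B) = Matrix.trace (B * A) := fun A B => Matrix.trace_mul_comm A B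
  have c1 : Matrix.trace (Z * (Zᵀ * (Z * Zᵀ))) = Matrix.trace (Zᵀ * (Z * (Zᵀ * Z))) := by
    rw [rot Z (Zᵀ * (Z * Zᵀ))]; simp only [Matrix.mul_assoc]
  have c3 : Matrix.trace (Y * (Yᵀ * (Y * Yᵀ))) = Matrix.trace (Yᵀ * (Y * (Yᵀ * Y))) := by
    rw [rot Y (Yᵀ * (Y * Yᵀ))]; simp only [Matrix.mul_assoc]
  have c2 : Matrix.trace (Z * (Zᵀ * (Y * Yᵀ))) = Matrix.trace (Yᵀ * (Z * (Yᵀ * Z))) := by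
    rw [rot Z (Zᵀ * (Y * Yᵀ))]
    simp only [Matrix.mul_assoc]
    rw [← Matrix.mul_assoc Zᵀ Y (Yᵀ * Z), hZY]
    simp only [Matrix.mul_assoc]
  have c4 : Matrix.trace (Zᵀ * (Z * (Yᵀ * Z))) = Matrix.trace (Yᵀ * (Z * (Zᵀ * Z))) := by
    rw [rot Zᵀ (Z * (Yᵀ * Z))]
    simp only [Matrix.mul_assoc]
    rw [rot Z (Yᵀ * (Z * Zᵀ))]
    simp only [Matrix.mul_assoc]
  have c5 : Matrix.trace (Yᵀ * (Y * (Yᵀ * Z))) = Matrix.trace (Yᵀ * (Z * (Yᵀ * Y))) := by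
    rw [rot Yᵀ (Y * (Yᵀ * Z))]
    simp only [Matrix.mul_assoc]
    rw [rot Y (Yᵀ * (Z * Yᵀ))]
    simp only [Matrix.mul_assoc]
  rw [c1, c2, c3, c4, c5]
  ring

/-- Cauchy-Schwarz for a quadratic form. -/
lemma quad_sq_le {m : Type*} [Fintype m] (Δ : Matrix m m ℝ) (y : m → ℝ) :
    (y ⬝ᵥ (Δ *ᵥ y)) ^ 2 ≤ fsq Δ * (∑ i, y i ^ 2) ^ 2 := by
  have h1 : y ⬝ᵥ (Δ *ᵥ y) = ∑ p : m × m, Δ p.1 p.2 * (y p.1 * y p.2) := by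
    rw [Fintype.sum_prod_type]
    simp only [dotProduct, Matrix.mulVec, Finset.mul_sum]
    congr 1; ext i; congr 1; ext j; ring
  have h2 : fsq Δ = ∑ p : m × m, Δ p.1 p.2 ^ 2 := by
    rw [fsq, Fintype.sum_prod_type]
  have h3 : (∑ i, y i ^ 2) ^ 2 = ∑ p : m × m, (y p.1 * y p.2) ^ 2 := by
    rw [Fintype.sum_prod_type, sq (∑ i, y i ^ 2), Finset.sum_mul_sum]
    congr 1; ext i; congr 1; ext j; ring
  rw [h1, h2, h3]
  exact Finset.sum_mul_sq_le_sq_mul_sq _ _ _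


lemma dot_self_eq_sum_sq {m : Type*} [Fintype m] (y : m → ℝ) : y ⬝ᵥ y = ∑ i, y i ^ 2 := by
  simp [dotProduct, sq]

lemma dot_gram {m k : Type*} [Fintype m] [Fintype k] (Y : Matrix m k ℝ) (x : k → ℝ) :
    x ⬝ᵥ ((Yᵀ * Y) *ᵥ x) = ∑ i, (Y *ᵥ x) i ^ 2 := by
  rw [← Matrix.mulVec_mulVec, Matrix.dotProduct_mulVec, Matrix.vecMul_transpose,
    dot_self_eq_sum_sq]

lemma posSemidef_of_quad {k : Type*} [Fintype k] [DecidableEq k] (B : Matrix k k ℝ)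
    (hB : Bᵀ = B) (h : ∀ x, 0 ≤ x ⬝ᵥ (B *ᵥ x)) : B.PosSemidef := by
  apply Matrix.PosSemidef.of_dotProduct_mulVec_nonneg
  · show Bᴴ = B
    rw [Matrix.conjTranspose_eq_transpose_of_trivial]; exact hB
  · intro x; simpa using h x

lemma sum_sq_pos_of_ne_zero {k : Type*} [Fintype k] {x : k → ℝ} (hx : x ≠ 0) :
    0 < ∑ j, x j ^ 2 := by
  obtain ⟨i, hi⟩ := Function.ne_iff.mp hx
  have hi' : x i ≠ 0 := by simpa using hi
  have h1 : 0 < x i ^ 2 := by positivity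
  have h2 : x i ^ 2 ≤ ∑ j, x j ^ 2 :=
    Finset.single_le_sum (fun j _ => sq_nonneg (x j)) (Finset.mem_univ i)
  linarith

/-- The key factorization lemma: if both factors have squared singular values `≥ lam`
and the products are close, there is a horizontal `H` of small norm. -/
lemma main_key {n r : ℕ} (Yt Ys : Matrix (Fin n) (Fin r) ℝ) (lam : ℝ) (hlam : 0 < lam)
    (hYt : ∀ x : Fin r → ℝ, lam * (∑ j, x j ^ 2) ≤ ∑ i, (Yt *ᵥ x) i ^ 2)
    (hYs : ∀ x : Fin r → ℝ, lam * (∑ j, x j ^ 2) ≤ ∑ i, (Ys *ᵥ x) i ^ 2)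
    (hclose : fsq (Ys * Ysᵀ - Yt * Ytᵀ) < lam ^ 2) :
    ∃ H : Matrix (Fin n) (Fin r) ℝ,
      Ytᵀ * H = Hᵀ * Yt ∧ fsq H < lam ∧ Ys * Ysᵀ = (Yt + H) * (Yt + H)ᵀ := by
  classical
  set M : Matrix (Fin r) (Fin r) ℝ := Ytᵀ * Ys with hM
  -- `M * Mᵀ` is positive definite
  have hMMt : M * Mᵀ = Ytᵀ * (Ys * Ysᵀ) * Yt := by
    rw [hM, Matrix.transpose_mul, Matrix.transpose_transpose]
    simp only [Matrix.mul_assoc]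
  have hPD : (M * Mᵀ).PosDef := by
    apply Matrix.PosDef.of_dotProduct_mulVec_pos
    · show (M * Mᵀ)ᴴ = M * Mᵀ
      rw [Matrix.conjTranspose_eq_transpose_of_trivial, Matrix.transpose_mul,
        Matrix.transpose_transpose]
    · intro x hx
      have hsx : star x = x := by simp
      rw [hsx]
      set y : Fin n → ℝ := Yt *ᵥ x with hy
      have hq : x ⬝ᵥ ((M * Mᵀ) *ᵥ x) = y ⬝ᵥ ((Ys * Ysᵀ) *ᵥ y) := by
        rw [hMMt]
        rw [← Matrix.mulVec_mulVec, ← Matrix.mulVec_mulVec, Matrix.dotProduct_mulVec,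
          Matrix.vecMul_transpose]
      -- decompose Ys*Ysᵀ = Yt*Ytᵀ + Δ
      set Δ : Matrix (Fin n) (Fin n) ℝ := Ys * Ysᵀ - Yt * Ytᵀ with hΔ
      have hsplit : y ⬝ᵥ ((Ys * Ysᵀ) *ᵥ y) = y ⬝ᵥ ((Yt * Ytᵀ) *ᵥ y) + y ⬝ᵥ (Δ *ᵥ y) := by
        rw [hΔ]
        rw [Matrix.sub_mulVec, dotProduct_sub]
        ring
      -- the Xt part: yᵀ Xt y = ‖A x‖² ≥ lam * (xᵀ A x) where A = Ytᵀ Yt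
      set A : Matrix (Fin r) (Fin r) ℝ := Ytᵀ * Yt with hA
      have hAt : Aᵀ = A := by rw [hA, Matrix.transpose_mul, Matrix.transpose_transpose]
      have hAx : Ytᵀ *ᵥ y = A *ᵥ x := by rw [hy, Matrix.mulVec_mulVec]
      have hXt : y ⬝ᵥ ((Yt * Ytᵀ) *ᵥ y) = ∑ i, (A *ᵥ x) i ^ 2 := by
        have : (Yt * Ytᵀ) = (Ytᵀ)ᵀ * Ytᵀ := by rw [Matrix.transpose_transpose]
        rw [this, dot_gram, hAx]
      -- quadratic form of A: xᵀ A x = ∑ (Yt x)²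
      have hquadA : ∀ z : Fin r → ℝ, z ⬝ᵥ (A *ᵥ z) = ∑ i, (Yt *ᵥ z) i ^ 2 := by
        intro z; rw [hA, dot_gram]
      -- B := A - lam • 1 is psd-quadratic
      have hBquad : ∀ z : Fin r → ℝ, 0 ≤ z ⬝ᵥ (A *ᵥ z) - lam * (z ⬝ᵥ z) := by
        intro z
        have := hYt z
        rw [hquadA z, dot_self_eq_sum_sq]
        linarith
      -- ‖A x‖² ≥ lam * xᵀ A x
      have hAAx : lam * (x ⬝ᵥ (A *ᵥ x)) ≤ ∑ i, (A *ᵥ x) i ^ 2 := by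
        set B : Matrix (Fin r) (Fin r) ℝ := A - lam • (1 : Matrix (Fin r) (Fin r) ℝ) with hB
        have hBt : Bᵀ = B := by
          rw [hB, Matrix.transpose_sub, hAt, Matrix.transpose_smul, Matrix.transpose_one]
        have hBv : ∀ z : Fin r → ℝ, B *ᵥ z = A *ᵥ z - lam • z := by
          intro z
          rw [hB, Matrix.sub_mulVec, Matrix.smul_mulVec, Matrix.one_mulVec]
        -- xᵀ B² x = ‖Bx‖² ≥ 0 and xᵀ B x ≥ 0
        have h1 : 0 ≤ (B *ᵥ x) ⬝ᵥ (B *ᵥ x) := by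
          rw [dot_self_eq_sum_sq]; apply Finset.sum_nonneg; intros; positivity
        have h2 : 0 ≤ x ⬝ᵥ (B *ᵥ x) := by
          have := hBquad x
          rw [hBv x, dotProduct_sub, dotProduct_smul]
          simpa [smul_eq_mul] using this
        -- expand (Bx)·(Bx) = (Ax)·(Ax) - 2 lam x·(Ax) + lam² x·x
        have hexp : (B *ᵥ x) ⬝ᵥ (B *ᵥ x)
            = (A *ᵥ x) ⬝ᵥ (A *ᵥ x) - 2 * lam * (x ⬝ᵥ (A *ᵥ x)) + lam ^ 2 * (x ⬝ᵥ x) := by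
          rw [hBv x]
          rw [sub_dotProduct, dotProduct_sub, dotProduct_sub, smul_dotProduct,
            dotProduct_smul, smul_dotProduct, dotProduct_smul]
          have hsymm : (A *ᵥ x) ⬝ᵥ x = x ⬝ᵥ (A *ᵥ x) := dotProduct_comm _ _
          simp only [smul_eq_mul, hsymm]
          ring
        have h3 := hBquad x
        have h4 : (A *ᵥ x) ⬝ᵥ (A *ᵥ x) = ∑ i, (A *ᵥ x) i ^ 2 := dot_self_eq_sum_sq _
        nlinarith [h1, h2, h3, hexp]
      -- Δ part
      have hΔbd : (y ⬝ᵥ (Δ *ᵥ y)) ^ 2 ≤ fsq Δ * (∑ i, y i ^ 2) ^ 2 := quad_sq_le Δ y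
      have hfd : Real.sqrt (fsq Δ) < lam := (Real.sqrt_lt' hlam).mpr hclose
      have hΔlow : -(Real.sqrt (fsq Δ)) * (∑ i, y i ^ 2) ≤ y ⬝ᵥ (Δ *ᵥ y) := by
        have hs : Real.sqrt (fsq Δ) ^ 2 = fsq Δ := Real.sq_sqrt (fsq_nonneg Δ)
        have hy2 : (0:ℝ) ≤ ∑ i, y i ^ 2 := by apply Finset.sum_nonneg; intros; positivity
        have hbc : (0:ℝ) ≤ Real.sqrt (fsq Δ) * (∑ i, y i ^ 2) :=
          mul_nonneg (Real.sqrt_nonneg _) hy2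
        have h2 : (y ⬝ᵥ (Δ *ᵥ y)) ^ 2 ≤ (Real.sqrt (fsq Δ) * (∑ i, y i ^ 2)) ^ 2 := by
          rw [mul_pow, hs]; exact hΔbd
        have habs : |y ⬝ᵥ (Δ *ᵥ y)| ≤ Real.sqrt (fsq Δ) * (∑ i, y i ^ 2) := by
          calc |y ⬝ᵥ (Δ *ᵥ y)| = Real.sqrt ((y ⬝ᵥ (Δ *ᵥ y)) ^ 2) := (Real.sqrt_sq_eq_abs _).symm
            _ ≤ Real.sqrt ((Real.sqrt (fsq Δ) * (∑ i, y i ^ 2)) ^ 2) := Real.sqrt_le_sqrt h2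
            _ = Real.sqrt (fsq Δ) * (∑ i, y i ^ 2) := Real.sqrt_sq hbc
        have := neg_abs_le (y ⬝ᵥ (Δ *ᵥ y))
        linarith
      -- collect
      have hyy : ∑ i, y i ^ 2 = x ⬝ᵥ (A *ᵥ x) := by
        rw [hquadA x, hy]
      have hxx : 0 < ∑ j, x j ^ 2 := sum_sq_pos_of_ne_zero hx
      have hxAx : lam * (∑ j, x j ^ 2) ≤ x ⬝ᵥ (A *ᵥ x) := by
        rw [hquadA x]; exact hYt x
      rw [hq, hsplit, hXt]
      have : (lam - Real.sqrt (fsq Δ)) * (x ⬝ᵥ (A *ᵥ x)) > 0 := by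
        apply mul_pos
        · linarith
        · calc (0:ℝ) < lam * (∑ j, x j ^ 2) := by positivity
            _ ≤ x ⬝ᵥ (A *ᵥ x) := hxAx
      nlinarith [hAAx, hΔlow, hyy]
  -- M is invertible
  have hdetMM : 0 < (M * Mᵀ).det := hPD.det_pos
  have hdetM : M.det ≠ 0 := by
    intro h
    rw [Matrix.det_mul, Matrix.det_transpose, h, mul_zero] at hdetMM
    exact lt_irrefl 0 hdetMM
  -- the positive semidefinite square root of Mᵀ M
  have hMM : (Mᵀ * M).PosSemidef := by
    have := Matrix.posSemidef_conjTranspose_mul_self M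
    rwa [Matrix.conjTranspose_eq_transpose_of_trivial] at this
  set P : Matrix (Fin r) (Fin r) ℝ := (open MatrixOrder in CFC.sqrt (Mᵀ * M)) with hPdef
  have hPP : P * P = Mᵀ * M := by
    open MatrixOrder in exact CFC.sqrt_mul_sqrt_self _ hMM.nonneg
  have hPsd : P.PosSemidef := by
    open MatrixOrder in exact (CFC.sqrt_nonneg _).posSemidef
  have hPt : Pᵀ = P := by
    rw [← Matrix.conjTranspose_eq_transpose_of_trivial]
    exact hPsd.1
  have hdetP : P.det ≠ 0 := by
    intro h
    have h2 : (P * P).det = 0 := by rw [Matrix.det_mul, h, mul_zero]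
    rw [hPP, Matrix.det_mul, Matrix.det_transpose] at h2
    exact hdetM (mul_self_eq_zero.mp h2)
  have hu : IsUnit P.det := isUnit_iff_ne_zero.mpr hdetP
  have hPinvT : (P⁻¹)ᵀ = P⁻¹ := by rw [Matrix.transpose_nonsing_inv, hPt]
  -- the orthogonal alignment Q
  set Q : Matrix (Fin r) (Fin r) ℝ := P⁻¹ * Mᵀ with hQ
  have hQt : Qᵀ = M * P⁻¹ := by
    rw [hQ, Matrix.transpose_mul, Matrix.transpose_transpose, hPinvT]
  have hQQt : Q * Qᵀ = 1 := by
    rw [hQ, hQt]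
    calc P⁻¹ * Mᵀ * (M * P⁻¹) = P⁻¹ * (Mᵀ * M) * P⁻¹ := by simp only [Matrix.mul_assoc]
      _ = P⁻¹ * (P * P) * P⁻¹ := by rw [hPP]
      _ = (P⁻¹ * P) * (P * P⁻¹) := by simp only [Matrix.mul_assoc]
      _ = 1 := by rw [Matrix.nonsing_inv_mul P hu, Matrix.mul_nonsing_inv P hu, one_mul]
  have hQtQ : Qᵀ * Q = 1 := mul_eq_one_comm.mp hQQt
  -- the aligned factor Z
  set Z : Matrix (Fin n) (Fin r) ℝ := Ys * Q with hZdef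
  have hZZt : Z * Zᵀ = Ys * Ysᵀ := by
    rw [hZdef, Matrix.transpose_mul]
    calc Ys * Q * (Qᵀ * Ysᵀ) = Ys * (Q * Qᵀ * Ysᵀ) := by simp only [Matrix.mul_assoc]
      _ = Ys * Ysᵀ := by rw [hQQt, Matrix.one_mul]
  have hS : Ytᵀ * Z = M * P⁻¹ * Mᵀ := by
    rw [hZdef, hQ, hM]; simp only [Matrix.mul_assoc]
  -- S is symmetric positive semidefinite
  have hPinvPsd : (P⁻¹).PosSemidef := by
    have h1 := hPsd.conjTranspose_mul_mul_same (B := P⁻¹)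
    have h2 : (P⁻¹)ᴴ = P⁻¹ := by
      rw [Matrix.conjTranspose_eq_transpose_of_trivial, hPinvT]
    rw [h2] at h1
    have h3 : P⁻¹ * P * P⁻¹ = P⁻¹ := by
      rw [Matrix.nonsing_inv_mul P hu, Matrix.one_mul]
    rwa [h3] at h1
  have hSpsd : (Ytᵀ * Z).PosSemidef := by
    rw [hS]
    have := hPinvPsd.mul_mul_conjTranspose_same (B := M)
    rwa [Matrix.conjTranspose_eq_transpose_of_trivial] at this
  have hSt : (Ytᵀ * Z)ᵀ = Ytᵀ * Z := by
    rw [← Matrix.conjTranspose_eq_transpose_of_trivial]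
    exact hSpsd.1
  have hZY : Zᵀ * Yt = Ytᵀ * Z := by
    have h0 : (Ytᵀ * Z)ᵀ = Zᵀ * Ytᵀᵀ := Matrix.transpose_mul _ _
    rw [Matrix.transpose_transpose] at h0
    rw [← h0, hSt]
  -- quadratic lower bound for Z
  have hZq : ∀ x : Fin r → ℝ, lam * (∑ j, x j ^ 2) ≤ ∑ i, (Z *ᵥ x) i ^ 2 := by
    intro x
    have hsum : ∑ j, (Q *ᵥ x) j ^ 2 = ∑ j, x j ^ 2 := by
      rw [← dot_gram, hQtQ, Matrix.one_mulVec, dot_self_eq_sum_sq]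
    have h1 := hYs (Q *ᵥ x)
    rw [hsum] at h1
    have h2 : Z *ᵥ x = Ys *ᵥ (Q *ᵥ x) := by rw [hZdef, ← Matrix.mulVec_mulVec]
    rw [h2]
    exact h1
  -- two PSD matrices from the eigenvalue bounds
  have hsymmZ : (Zᵀ * Z - lam • (1 : Matrix (Fin r) (Fin r) ℝ))ᵀ
      = Zᵀ * Z - lam • (1 : Matrix (Fin r) (Fin r) ℝ) := by
    rw [Matrix.transpose_sub, Matrix.transpose_mul, Matrix.transpose_transpose,
      Matrix.transpose_smul, Matrix.transpose_one]
  have hsymmA : (Ytᵀ * Yt - lam • (1 : Matrix (Fin r) (Fin r) ℝ))ᵀ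
      = Ytᵀ * Yt - lam • (1 : Matrix (Fin r) (Fin r) ℝ) := by
    rw [Matrix.transpose_sub, Matrix.transpose_mul, Matrix.transpose_transpose,
      Matrix.transpose_smul, Matrix.transpose_one]
  have hCZpsd : (Zᵀ * Z - lam • (1 : Matrix (Fin r) (Fin r) ℝ)).PosSemidef := by
    apply posSemidef_of_quad _ hsymmZ
    intro x
    rw [Matrix.sub_mulVec, dotProduct_sub, dot_gram, Matrix.smul_mulVec,
      Matrix.one_mulVec, dotProduct_smul, dot_self_eq_sum_sq]
    have := hZq x
    simp only [smul_eq_mul]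
    linarith
  have hCApsd : (Ytᵀ * Yt - lam • (1 : Matrix (Fin r) (Fin r) ℝ)).PosSemidef := by
    apply posSemidef_of_quad _ hsymmA
    intro x
    rw [Matrix.sub_mulVec, dotProduct_sub, dot_gram, Matrix.smul_mulVec,
      Matrix.one_mulVec, dotProduct_smul, dot_self_eq_sum_sq]
    have := hYt x
    simp only [smul_eq_mul]
    linarith
  -- scalar bookkeeping
  have hHH : (Z - Yt)ᵀ * (Z - Yt) = Zᵀ * Z + Ytᵀ * Yt - Ytᵀ * Z - Ytᵀ * Z := by
    rw [Matrix.transpose_sub, Matrix.sub_mul, Matrix.mul_sub, Matrix.mul_sub, hZY]; abel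
  have hHHt : ((Z - Yt)ᵀ * (Z - Yt))ᵀ = (Z - Yt)ᵀ * (Z - Yt) := by
    rw [Matrix.transpose_mul, Matrix.transpose_transpose]
  set T : ℝ := Matrix.trace (((Z - Yt)ᵀ * (Z - Yt)) * (Ytᵀ * Z)) with hT
  have f1 : fsq (Ys * Ysᵀ - Yt * Ytᵀ)
      = 2 * T + fsq (Ytᵀ * Z - Ytᵀ * Yt) + fsq (Ytᵀ * Z - Zᵀ * Z) := by
    rw [← hZZt]
    exact key_identity Yt Z hZY
  have f2 : 0 ≤ T := trace_mul_psd_nonneg (Z - Yt) _ hSpsd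
  -- expansion of the PSD trace inequalities
  have expand : ∀ C : Matrix (Fin r) (Fin r) ℝ,
      Matrix.trace (((Z - Yt)ᵀ * (Z - Yt)) * (C - lam • (1 : Matrix (Fin r) (Fin r) ℝ)))
        = Matrix.trace (((Z - Yt)ᵀ * (Z - Yt)) * C) - lam * fsq (Z - Yt) := by
    intro C
    rw [Matrix.mul_sub, Matrix.trace_sub, Matrix.mul_smul, Matrix.trace_smul, Matrix.mul_one,
      smul_eq_mul, ← fsq_eq_trace]
  have g1 : 0 ≤ Matrix.trace (((Z - Yt)ᵀ * (Z - Yt)) * (Zᵀ * Z)) - lam * fsq (Z - Yt) := by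
    rw [← expand]
    exact trace_mul_psd_nonneg _ _ hCZpsd
  have g2 : 0 ≤ Matrix.trace (((Z - Yt)ᵀ * (Z - Yt)) * (Ytᵀ * Yt)) - lam * fsq (Z - Yt) := by
    rw [← expand]
    exact trace_mul_psd_nonneg _ _ hCApsd
  have g3 : fsq ((Z - Yt)ᵀ * (Z - Yt))
      = Matrix.trace (((Z - Yt)ᵀ * (Z - Yt)) * (Zᵀ * Z))
        + Matrix.trace (((Z - Yt)ᵀ * (Z - Yt)) * (Ytᵀ * Yt)) - 2 * T := by
    obtain ⟨W, hW⟩ : ∃ W : Matrix (Fin r) (Fin r) ℝ, W = (Z - Yt)ᵀ * (Z - Yt) := ⟨_, rfl⟩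
    rw [← hW] at hHH hHHt ⊢
    rw [hT, ← hW]
    have e := congrArg (fun B => Matrix.trace (W * B)) hHH
    simp only [Matrix.mul_sub, Matrix.mul_add, Matrix.trace_sub, Matrix.trace_add] at e
    rw [fsq_eq_trace, hHHt, e]
    ring
  have f4 : fsq ((Z - Yt)ᵀ * (Z - Yt))
      ≤ 2 * fsq (Ytᵀ * Z - Ytᵀ * Yt) + 2 * fsq (Ytᵀ * Z - Zᵀ * Z) := by
    have hHH2 : (Z - Yt)ᵀ * (Z - Yt)
        = -((Ytᵀ * Z - Ytᵀ * Yt) + (Ytᵀ * Z - Zᵀ * Z)) := by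
      rw [hHH]; abel
    rw [hHH2, fsq_neg]
    exact fsq_add_le _ _
  -- combine : lam * fsq (Z - Yt) ≤ fsq Δ
  have key : lam * fsq (Z - Yt) ≤ fsq (Ys * Ysᵀ - Yt * Ytᵀ) := by linarith
  have hlt : fsq (Z - Yt) < lam := by
    have h1 : lam * fsq (Z - Yt) < lam * lam := by
      calc lam * fsq (Z - Yt) ≤ fsq (Ys * Ysᵀ - Yt * Ytᵀ) := key
        _ < lam ^ 2 := hclose
        _ = lam * lam := sq lam
    exact lt_of_mul_lt_mul_left h1 hlam.le
  refine ⟨Z - Yt, ?_, hlt, ?_⟩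
  · rw [Matrix.mul_sub, Matrix.transpose_sub, Matrix.sub_mul, hZY]
  · have : Yt + (Z - Yt) = Z := by abel
    rw [this, hZZt]


lemma frobNorm_eq_norm {n r : ℕ} (A : Matrix (Fin n) (Fin r) ℝ) : frobNorm A = ‖A‖ := by
  rw [frobNorm, Matrix.frobenius_norm_def]
  have h : ∀ i j, ‖A i j‖ ^ (2:ℝ) = A i j ^ 2 := by
    intro i j
    rw [show ((2:ℝ)) = ((2:ℕ):ℝ) by norm_num, Real.rpow_natCast, Real.norm_eq_abs, sq_abs]
  simp_rw [h]
  rw [Real.sqrt_eq_rpow]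

lemma frobNorm_eq_sqrt_fsq {n r : ℕ} (A : Matrix (Fin n) (Fin r) ℝ) :
    frobNorm A = Real.sqrt (fsq A) := rfl

lemma fsq_eq_sq_norm {n r : ℕ} (A : Matrix (Fin n) (Fin r) ℝ) : fsq A = ‖A‖ ^ 2 := by
  rw [← frobNorm_eq_norm, frobNorm_eq_sqrt_fsq, Real.sq_sqrt (fsq_nonneg A)]

lemma sigmaMin_nonneg {n r : ℕ} (Y : Matrix (Fin n) (Fin r) ℝ) : 0 ≤ sigmaMin Y := by
  apply Real.sInf_nonneg
  rintro c ⟨x, hx, rfl⟩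
  exact Real.sqrt_nonneg _

lemma sigmaMin_quad {n r : ℕ} (Y : Matrix (Fin n) (Fin r) ℝ) {lam : ℝ}
    (h : lam ≤ sigmaMin Y ^ 2) :
    ∀ x : Fin r → ℝ, lam * (∑ j, x j ^ 2) ≤ ∑ i, (Y *ᵥ x) i ^ 2 := by
  intro x
  by_cases hx : x = 0
  · subst hx
    simp [Matrix.mulVec_zero]
  · have hc2 : 0 < ∑ j, x j ^ 2 := sum_sq_pos_of_ne_zero hx
    set c : ℝ := Real.sqrt (∑ j, x j ^ 2) with hc
    have hcpos : 0 < c := Real.sqrt_pos.mpr hc2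
    have hcsq : c ^ 2 = ∑ j, x j ^ 2 := Real.sq_sqrt hc2.le
    set x' : Fin r → ℝ := c⁻¹ • x with hx'
    have hx'unit : ∑ j, x' j ^ 2 = 1 := by
      have : ∀ j, x' j ^ 2 = c⁻¹ ^ 2 * x j ^ 2 := by
        intro j; rw [hx']; simp [mul_pow]
      simp_rw [this]
      rw [← Finset.mul_sum, ← hcsq]
      field_simp
    have hbdd : BddBelow {c | ∃ x : Fin r → ℝ, (∑ j, (x j) ^ 2) = 1 ∧
        c = Real.sqrt (∑ i, (Y.mulVec x i) ^ 2)} := by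
      refine ⟨0, ?_⟩
      rintro d ⟨z, hz, rfl⟩
      exact Real.sqrt_nonneg _
    have hmem : Real.sqrt (∑ i, (Y.mulVec x' i) ^ 2) ∈ {c | ∃ x : Fin r → ℝ,
        (∑ j, (x j) ^ 2) = 1 ∧ c = Real.sqrt (∑ i, (Y.mulVec x i) ^ 2)} :=
      ⟨x', hx'unit, rfl⟩
    have hle : sigmaMin Y ≤ Real.sqrt (∑ i, (Y.mulVec x' i) ^ 2) := csInf_le hbdd hmem
    have hv : (0:ℝ) ≤ ∑ i, (Y.mulVec x' i) ^ 2 := by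
      apply Finset.sum_nonneg; intros; positivity
    have hsq : sigmaMin Y ^ 2 ≤ ∑ i, (Y.mulVec x' i) ^ 2 := by
      calc sigmaMin Y ^ 2 ≤ Real.sqrt (∑ i, (Y.mulVec x' i) ^ 2) ^ 2 :=
            pow_le_pow_left₀ (sigmaMin_nonneg Y) hle 2
        _ = ∑ i, (Y.mulVec x' i) ^ 2 := Real.sq_sqrt hv
    have hscale : ∑ i, (Y.mulVec x' i) ^ 2 = c⁻¹ ^ 2 * ∑ i, (Y.mulVec x i) ^ 2 := by
      have h1 : Y.mulVec x' = c⁻¹ • (Y.mulVec x) := by rw [hx', Matrix.mulVec_smul]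
      rw [h1]
      simp_rw [Pi.smul_apply, smul_eq_mul, mul_pow]
      rw [← Finset.mul_sum]
    have hfin : lam ≤ c⁻¹ ^ 2 * ∑ i, (Y.mulVec x i) ^ 2 := le_trans h (hscale ▸ hsq)
    have hcne : c ≠ 0 := ne_of_gt hcpos
    calc lam * (∑ j, x j ^ 2) = lam * c ^ 2 := by rw [hcsq]
      _ ≤ (c⁻¹ ^ 2 * ∑ i, (Y.mulVec x i) ^ 2) * c ^ 2 := by
          apply mul_le_mul_of_nonneg_right hfin (by positivity)
      _ = ∑ i, (Y.mulVec x i) ^ 2 := by field_simp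

lemma sigmaMin_eq_zero_of_r_zero {n : ℕ} (Y : Matrix (Fin n) (Fin 0) ℝ) : sigmaMin Y = 0 := by
  have hempty : {c | ∃ x : Fin 0 → ℝ, (∑ j, (x j) ^ 2) = 1 ∧
      c = Real.sqrt (∑ i, (Y.mulVec x i) ^ 2)} = ∅ := by
    ext c
    simp
  rw [sigmaMin, hempty, Real.sInf_empty]

end TIHB

open TIHB in
/-- Time interval for the factorized problem: if the solution curve `t ↦ X_t` is
continuously differentiable with `‖Ẋ‖_F ≤ L`, `X_s = Y_s Y_sᵀ` with `Y_s` of rank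
`r` and smallest nonzero eigenvalue `λ_r(X_s) = σ_r(Y_s)² ≥ λ* > 0`, then for
`Δt < 2λ*/(L(√(r+4)+√r))` every `X_s` with `s ∈ [t, t+Δt]` lies in the image of
the horizontal ball `Y_t + B_{Y_t}` under `Z ↦ Z Zᵀ`. -/
theorem time_interval_horizontal_ball {n r : ℕ}
    (X X' : ℝ → Matrix (Fin n) (Fin n) ℝ) (Y : ℝ → Matrix (Fin n) (Fin r) ℝ)
    (L lam t Δt : ℝ) (hL : 0 < L) (hlam : 0 < lam)
    (hderiv : ∀ s, HasDerivAt X (X' s) s) (hcont : Continuous X')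
    (hdbound : ∀ s, frobNorm (X' s) ≤ L)
    (hfact : ∀ s, X s = Y s * (Y s)ᵀ) (hrank : ∀ s, (Y s).rank = r)
    (heig : ∀ s, lam ≤ sigmaMin (Y s) ^ 2)
    (hΔt : 0 < Δt) (hΔtsmall : Δt < 2 * lam / (L * (Real.sqrt (r + 4) + Real.sqrt r))) :
    ∀ s ∈ Set.Icc t (t + Δt), ∃ H : Matrix (Fin n) (Fin r) ℝ,
      (Y t)ᵀ * H = Hᵀ * (Y t) ∧ frobNorm H < sigmaMin (Y t) ∧
        X s = (Y t + H) * (Y t + H)ᵀ := by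
  intro s hs
  -- the case r = 0 is vacuous : it contradicts lam ≤ sigmaMin² with lam > 0
  rcases Nat.eq_zero_or_pos r with hr0 | hr
  · exfalso
    subst hr0
    have h0 := TIHB.sigmaMin_eq_zero_of_r_zero (Y t)
    have h1 := heig t
    rw [h0] at h1
    norm_num at h1
    linarith
  -- Lipschitz bound on X
  have hsub : (0:ℝ) ≤ s - t := sub_nonneg.mpr hs.1
  have hLip : ‖X s - X t‖ ≤ L * (s - t) := by
    have hbound : ∀ u ∈ (Set.univ : Set ℝ), ‖X' u‖ ≤ L := by
      intro u _
      rw [← TIHB.frobNorm_eq_norm]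
      exact hdbound u
    have hderiv' : ∀ u ∈ (Set.univ : Set ℝ), HasDerivWithinAt X (X' u) Set.univ u :=
      fun u _ => (hderiv u).hasDerivWithinAt
    have h := Convex.norm_image_sub_le_of_norm_hasDerivWithin_le hderiv' hbound
      convex_univ (Set.mem_univ t) (Set.mem_univ s)
    calc ‖X s - X t‖ ≤ L * ‖s - t‖ := h
      _ = L * (s - t) := by rw [Real.norm_eq_abs, abs_of_nonneg hsub]
  -- the denominator constant
  set cst : ℝ := Real.sqrt (r + 4) + Real.sqrt r with hcst
  have hc2 : (2:ℝ) ≤ cst := by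
    have h4 : Real.sqrt 4 ≤ Real.sqrt ((r:ℝ) + 4) := by
      apply Real.sqrt_le_sqrt
      have : (0:ℝ) ≤ (r:ℝ) := Nat.cast_nonneg r
      linarith
    have h4' : Real.sqrt 4 = 2 := by
      rw [show (4:ℝ) = 2 ^ 2 by norm_num, Real.sqrt_sq (by norm_num : (0:ℝ) ≤ 2)]
    have h5 : (0:ℝ) ≤ Real.sqrt r := Real.sqrt_nonneg _
    rw [hcst]
    rw [h4'] at h4
    linarith
  have hcpos : (0:ℝ) < cst := lt_of_lt_of_le (by norm_num) hc2
  -- the distance bound : ‖X s - X t‖ < lam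
  have hdist : ‖X s - X t‖ < lam := by
    have h1 : s - t ≤ Δt := by linarith [hs.2]
    have h2 : L * (s - t) ≤ L * Δt := mul_le_mul_of_nonneg_left h1 hL.le
    have h3 : L * Δt < L * (2 * lam / (L * cst)) := by
      apply mul_lt_mul_of_pos_left _ hL
      exact hΔtsmall
    have h4 : L * (2 * lam / (L * cst)) = 2 * lam / cst := by
      field_simp
    have h5 : 2 * lam / cst ≤ lam := by
      rw [div_le_iff₀ hcpos]
      nlinarith
    linarith
  -- package the closeness hypothesis
  have hΔfsq : TIHB.fsq (Y s * (Y s)ᵀ - Y t * (Y t)ᵀ) < lam ^ 2 := by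
    have h0 : Y s * (Y s)ᵀ - Y t * (Y t)ᵀ = X s - X t := by
      rw [hfact s, hfact t]
    rw [h0, TIHB.fsq_eq_sq_norm]
    exact pow_lt_pow_left₀ hdist (norm_nonneg _) (by norm_num)
  -- apply the key factorization lemma
  obtain ⟨H, h1, h2, h3⟩ := TIHB.main_key (Y t) (Y s) lam hlam
    (TIHB.sigmaMin_quad (Y t) (heig t)) (TIHB.sigmaMin_quad (Y s) (heig s)) hΔfsq
  refine ⟨H, h1, ?_, ?_⟩
  · -- frobNorm H < sigmaMin (Y t)
    have hsm : Real.sqrt lam ≤ sigmaMin (Y t) := by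
      have h0 := TIHB.sigmaMin_nonneg (Y t)
      calc Real.sqrt lam ≤ Real.sqrt (sigmaMin (Y t) ^ 2) := Real.sqrt_le_sqrt (heig t)
        _ = sigmaMin (Y t) := Real.sqrt_sq h0
    calc frobNorm H = Real.sqrt (TIHB.fsq H) := TIHB.frobNorm_eq_sqrt_fsq H
      _ < Real.sqrt lam := Real.sqrt_lt_sqrt (TIHB.fsq_nonneg H) h2
      _ ≤ sigmaMin (Y t) := hsm
  · rw [hfact s]
    exact h3
end

section
/- Fix Ŷ ∈ ℝ^{n×r}, a linear map A : S^n → ℝ^m with operator norm ‖A‖, and a cost matrix C ∈ S^n. Define the bilinear form J(Y,λ)[(H,Δλ,Δμ)] whose quadratic form is trace(Hᵀ(C − A*(λ))H) − 2⟨Δλ, A(Y Hᵀ + H Yᵀ)⟩ − 2⟨Δμ, Ŷᵀ H − Hᵀ Ŷ⟩. Then for all (Y₁,λ₁), (Y₂,λ₂), the difference of quadratic forms satisfies |(J(Y₁,λ₁) − J(Y₂,λ₂))[(H,Δλ,Δμ)]| ≤ 12√3 · ‖A‖ · ‖(Y₁−Y₂, λ₁−λ₂)‖ · ‖(H,Δλ,Δμ)‖²,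 i.e., J is Lipschitz in operator norm with constant 12√3 ‖A‖. -/
open Matrix BigOperators

/-- The linear map `S^n → ℝ^m` determined by the family of matrices `A`, namely
`X ↦ (trace(A₁ X), …, trace(A_m X))`. -/
noncomputable def applyA {n m : ℕ} (A : Fin m → Matrix (Fin n) (Fin n) ℝ)
    (X : Matrix (Fin n) (Fin n) ℝ) : Fin m → ℝ :=
  fun j => Matrix.trace (A j * X)

/-- The operator norm of the linear map `X ↦ (trace(Aⱼ X))ⱼ` from matrices with
the Frobenius norm to `ℝ^m` with the Euclidean norm. -/
noncomputable def opNormA {n m : ℕ} (A : Fin m → Matrix (Fin n) (Fin n) ℝ) : ℝ :=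
  sInf {c | 0 ≤ c ∧ ∀ X : Matrix (Fin n) (Fin n) ℝ,
    Real.sqrt (∑ j, (applyA A X j) ^ 2) ≤ c * frobNorm X}

lemma sumSqNonneg {ι : Type*} [Fintype ι] (f : ι → ℝ) : (0:ℝ) ≤ ∑ i, f i ^ 2 :=
  Finset.sum_nonneg fun i _ => sq_nonneg _

lemma absCS {ι : Type*} [Fintype ι] (f g : ι → ℝ) :
    |∑ i, f i * g i| ≤ Real.sqrt (∑ i, f i ^ 2) * Real.sqrt (∑ i, g i ^ 2) := by
  rcases abs_cases (∑ i, f i * g i) with ⟨h, _⟩ | ⟨h, _⟩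
  · rw [h]; exact Real.sum_mul_le_sqrt_mul_sqrt _ f g
  · rw [h]
    have := Real.sum_mul_le_sqrt_mul_sqrt Finset.univ (fun i => -f i) g
    simpa [neg_mul, Finset.sum_neg_distrib] using this

lemma frobNorm_nonneg {n r : ℕ} (M : Matrix (Fin n) (Fin r) ℝ) : 0 ≤ frobNorm M :=
  Real.sqrt_nonneg _

lemma frobNorm_sq {n r : ℕ} (M : Matrix (Fin n) (Fin r) ℝ) :
    frobNorm M ^ 2 = ∑ i, ∑ j, (M i j) ^ 2 :=
  Real.sq_sqrt (Finset.sum_nonneg fun i _ => sumSqNonneg _)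

lemma frobNorm_transpose {n r : ℕ} (M : Matrix (Fin n) (Fin r) ℝ) :
    frobNorm Mᵀ = frobNorm M := by
  unfold frobNorm
  rw [Finset.sum_comm]
  rfl

lemma frobNorm_mul_le {a b c : ℕ} (M : Matrix (Fin a) (Fin b) ℝ)
    (N : Matrix (Fin b) (Fin c) ℝ) :
    frobNorm (M * N) ≤ frobNorm M * frobNorm N := by
  unfold frobNorm
  rw [← Real.sqrt_mul (x := ∑ i, ∑ j, (M i j) ^ 2) (Finset.sum_nonneg fun i _ => sumSqNonneg _)
    (∑ i, ∑ j, (N i j) ^ 2)]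
  apply Real.sqrt_le_sqrt
  calc ∑ i, ∑ k, ((M * N) i k) ^ 2
      ≤ ∑ i, ∑ k, (∑ j, (M i j)^2) * (∑ j, (N j k)^2) := by
        refine Finset.sum_le_sum fun i _ => Finset.sum_le_sum fun k _ => ?_
        rw [Matrix.mul_apply]
        exact Finset.sum_mul_sq_le_sq_mul_sq _ _ _
    _ = (∑ i, ∑ j, (M i j)^2) * (∑ j, ∑ k, (N j k)^2) := by
        simp_rw [← Finset.mul_sum]
        rw [← Finset.sum_mul]
        congr 1
        exact Finset.sum_comm

lemma frobNorm_pair {n r : ℕ} (W : Matrix (Fin n) (Fin r) ℝ) :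
    frobNorm W = Real.sqrt (∑ p : Fin n × Fin r, (W p.1 p.2) ^ 2) := by
  rw [frobNorm]
  congr 1
  exact (Fintype.sum_prod_type (f := fun p : Fin n × Fin r => (W p.1 p.2) ^ 2)).symm

lemma frobNorm_add_le {n r : ℕ} (X Z : Matrix (Fin n) (Fin r) ℝ) :
    frobNorm (X + Z) ≤ frobNorm X + frobNorm Z := by
  rw [frobNorm_pair, frobNorm_pair, frobNorm_pair]
  set x : Fin n × Fin r → ℝ := fun p => X p.1 p.2 with hx
  set z : Fin n × Fin r → ℝ := fun p => Z p.1 p.2 with hz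
  have hsum : ∑ p : Fin n × Fin r, ((X + Z) p.1 p.2) ^ 2
      = (∑ p, x p ^ 2) + 2 * (∑ p, x p * z p) + ∑ p, z p ^ 2 := by
    rw [Finset.mul_sum, ← Finset.sum_add_distrib, ← Finset.sum_add_distrib]
    refine Finset.sum_congr rfl fun p _ => ?_
    simp only [Matrix.add_apply, hx, hz]
    ring
  have hcs := absCS x z
  have hb : (∑ p, x p * z p) ≤ Real.sqrt (∑ p, x p ^ 2) * Real.sqrt (∑ p, z p ^ 2) :=
    (le_abs_self _).trans hcs
  rw [hsum]
  have h1 : (∑ p, x p ^ 2) + 2 * (∑ p, x p * z p) + ∑ p, z p ^ 2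
      ≤ (Real.sqrt (∑ p, x p ^ 2) + Real.sqrt (∑ p, z p ^ 2)) ^ 2 := by
    have e1 : Real.sqrt (∑ p, x p ^ 2) ^ 2 = ∑ p, x p ^ 2 := Real.sq_sqrt (sumSqNonneg _)
    have e2 : Real.sqrt (∑ p, z p ^ 2) ^ 2 = ∑ p, z p ^ 2 := Real.sq_sqrt (sumSqNonneg _)
    nlinarith [hb]
  calc Real.sqrt ((∑ p, x p ^ 2) + 2 * (∑ p, x p * z p) + ∑ p, z p ^ 2)
      ≤ Real.sqrt ((Real.sqrt (∑ p, x p ^ 2) + Real.sqrt (∑ p, z p ^ 2)) ^ 2) :=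
        Real.sqrt_le_sqrt h1
    _ = _ := Real.sqrt_sq (add_nonneg (Real.sqrt_nonneg _) (Real.sqrt_nonneg _))

lemma trace_abs_le {n : ℕ} (M X : Matrix (Fin n) (Fin n) ℝ) :
    |Matrix.trace (M * X)| ≤ frobNorm M * frobNorm X := by
  have htr : Matrix.trace (M * X) = ∑ p : Fin n × Fin n, M p.1 p.2 * X p.2 p.1 := by
    rw [Matrix.trace]
    simp only [Matrix.diag, Matrix.mul_apply]
    exact (Fintype.sum_prod_type (f := fun p : Fin n × Fin n => M p.1 p.2 * X p.2 p.1)).symm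
  rw [htr]
  have hcs := absCS (fun p : Fin n × Fin n => M p.1 p.2) (fun p => X p.2 p.1)
  have e1 : Real.sqrt (∑ p : Fin n × Fin n, (M p.1 p.2) ^ 2) = frobNorm M :=
    (frobNorm_pair M).symm
  have e2 : Real.sqrt (∑ p : Fin n × Fin n, (X p.2 p.1) ^ 2) = frobNorm X := by
    have swap : ∑ p : Fin n × Fin n, (X p.2 p.1) ^ 2
        = ∑ p : Fin n × Fin n, (X p.1 p.2) ^ 2 :=
      Fintype.sum_equiv (Equiv.prodComm _ _) _ _ (fun p => rfl)
    rw [swap]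
    exact (frobNorm_pair X).symm
  rw [e1, e2] at hcs
  exact hcs

lemma opNormA_mem {n m : ℕ} (A : Fin m → Matrix (Fin n) (Fin n) ℝ) :
    Real.sqrt (∑ j, frobNorm (A j) ^ 2) ∈ {c | 0 ≤ c ∧ ∀ X : Matrix (Fin n) (Fin n) ℝ,
      Real.sqrt (∑ j, (applyA A X j) ^ 2) ≤ c * frobNorm X} := by
  refine ⟨Real.sqrt_nonneg _, fun X => ?_⟩
  have hstep : ∑ j, (applyA A X j) ^ 2 ≤ (∑ j, frobNorm (A j) ^ 2) * frobNorm X ^ 2 := by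
    rw [Finset.sum_mul]
    refine Finset.sum_le_sum fun j _ => ?_
    have h := trace_abs_le (A j) X
    have h2 : (applyA A X j) ^ 2 ≤ (frobNorm (A j) * frobNorm X) ^ 2 := by
      rw [← sq_abs]
      exact pow_le_pow_left₀ (abs_nonneg _) h 2
    calc (applyA A X j) ^ 2 ≤ (frobNorm (A j) * frobNorm X) ^ 2 := h2
      _ = frobNorm (A j) ^ 2 * frobNorm X ^ 2 := by ring
  calc Real.sqrt (∑ j, (applyA A X j) ^ 2)
      ≤ Real.sqrt ((∑ j, frobNorm (A j) ^ 2) * frobNorm X ^ 2) := Real.sqrt_le_sqrt hstep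
    _ = Real.sqrt (∑ j, frobNorm (A j) ^ 2) * frobNorm X := by
        rw [Real.sqrt_mul (Finset.sum_nonneg fun j _ => sq_nonneg _),
          Real.sqrt_sq (frobNorm_nonneg _)]

lemma opNormA_nonneg {n m : ℕ} (A : Fin m → Matrix (Fin n) (Fin n) ℝ) :
    0 ≤ opNormA A :=
  le_csInf ⟨_, opNormA_mem A⟩ fun _ hc => hc.1

lemma applyA_le {n m : ℕ} (A : Fin m → Matrix (Fin n) (Fin n) ℝ)
    (X : Matrix (Fin n) (Fin n) ℝ) :
    Real.sqrt (∑ j, (applyA A X j) ^ 2) ≤ opNormA A * frobNorm X := by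
  set S := {c | 0 ≤ c ∧ ∀ X : Matrix (Fin n) (Fin n) ℝ,
    Real.sqrt (∑ j, (applyA A X j) ^ 2) ≤ c * frobNorm X} with hS
  have hne : S.Nonempty := ⟨_, opNormA_mem A⟩
  have hbdd : BddBelow S := ⟨0, fun c hc => hc.1⟩
  rcases eq_or_lt_of_le (frobNorm_nonneg X) with h0 | hpos
  · have := (opNormA_mem A).2 X
    rw [← h0, mul_zero] at this ⊢
    exact this
  · have hdiv : Real.sqrt (∑ j, (applyA A X j) ^ 2) / frobNorm X ≤ opNormA A := by
      refine le_csInf hne fun c hc => ?_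
      rw [div_le_iff₀ hpos]
      exact hc.2 X
    calc Real.sqrt (∑ j, (applyA A X j) ^ 2)
        = Real.sqrt (∑ j, (applyA A X j) ^ 2) / frobNorm X * frobNorm X := by
          field_simp
      _ ≤ opNormA A * frobNorm X := mul_le_mul_of_nonneg_right hdiv hpos.le

/-- The quadratic form of the linearized KKT operator `J_{Ŷ}(Y, λ)` of the
horizontally-constrained Burer–Monteiro problem, evaluated at `(H, Δλ, Δμ)`:
`trace(Hᵀ(C − A*(λ))H) − 2⟨Δλ, A(Y Hᵀ + H Yᵀ)⟩ − 2⟨Δμ, Ŷᵀ H − Hᵀ Ŷ⟩`. -/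
noncomputable def kktQuadForm {n r m : ℕ} (A : Fin m → Matrix (Fin n) (Fin n) ℝ)
    (C : Matrix (Fin n) (Fin n) ℝ) (Yhat Y : Matrix (Fin n) (Fin r) ℝ)
    (lam : Fin m → ℝ) (H : Matrix (Fin n) (Fin r) ℝ) (Dlam : Fin m → ℝ)
    (Dmu : Matrix (Fin r) (Fin r) ℝ) : ℝ :=
  Matrix.trace (Hᵀ * (C - ∑ i, lam i • A i) * H)
    - 2 * ∑ j, Dlam j * applyA A (Y * Hᵀ + H * Yᵀ) j
    - 2 * Matrix.trace (Dmuᵀ * (Yhatᵀ * H - Hᵀ * Yhat))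

set_option maxHeartbeats 1000000 in
/-- Lipschitz continuity of the linearized KKT operator: the difference of the
quadratic forms at `(Y₁, λ₁)` and `(Y₂, λ₂)` is bounded by
`12√3 ‖A‖ ‖(Y₁−Y₂, λ₁−λ₂)‖ ‖(H, Δλ, Δμ)‖²`. -/
theorem kkt_operator_lipschitz {n r m : ℕ}
    (A : Fin m → Matrix (Fin n) (Fin n) ℝ) (hAsymm : ∀ i, (A i)ᵀ = A i)
    (C : Matrix (Fin n) (Fin n) ℝ) (hC : Cᵀ = C)
    (Yhat Y₁ Y₂ : Matrix (Fin n) (Fin r) ℝ) (lam₁ lam₂ : Fin m → ℝ)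
    (H : Matrix (Fin n) (Fin r) ℝ) (Dlam : Fin m → ℝ)
    (Dmu : Matrix (Fin r) (Fin r) ℝ) (hDmu : Dmuᵀ = -Dmu) :
    |kktQuadForm A C Yhat Y₁ lam₁ H Dlam Dmu -
        kktQuadForm A C Yhat Y₂ lam₂ H Dlam Dmu| ≤
      12 * Real.sqrt 3 * opNormA A *
        Real.sqrt (frobNorm (Y₁ - Y₂) ^ 2 + ∑ i, (lam₁ i - lam₂ i) ^ 2) *
        (frobNorm H ^ 2 + ∑ j, (Dlam j) ^ 2 + frobNorm Dmu ^ 2) := by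
  set E := Y₁ - Y₂ with hE
  -- the trace difference
  have happ : ∀ i : Fin m, Matrix.trace (Hᵀ * A i * H) = applyA A (H * Hᵀ) i := by
    intro i
    rw [Matrix.trace_mul_cycle, Matrix.trace_mul_comm]
    rfl
  have hT : Matrix.trace (Hᵀ * (C - ∑ i, lam₁ i • A i) * H)
      - Matrix.trace (Hᵀ * (C - ∑ i, lam₂ i • A i) * H)
      = ∑ i, (lam₂ i - lam₁ i) * applyA A (H * Hᵀ) i := by
    have hd : (C - ∑ i, lam₁ i • A i) - (C - ∑ i, lam₂ i • A i)
        = ∑ i, (lam₂ i - lam₁ i) • A i := by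
      rw [sub_sub_sub_cancel_left, ← Finset.sum_sub_distrib]
      exact Finset.sum_congr rfl fun i _ => (sub_smul _ _ _).symm
    have hmat : Hᵀ * (C - ∑ i, lam₁ i • A i) * H - Hᵀ * (C - ∑ i, lam₂ i • A i) * H
        = Hᵀ * (∑ i, (lam₂ i - lam₁ i) • A i) * H := by
      rw [← hd]
      conv_rhs => rw [Matrix.mul_sub, Matrix.sub_mul]
    have hsum : Hᵀ * (∑ i, (lam₂ i - lam₁ i) • A i) * H
        = ∑ i, (lam₂ i - lam₁ i) • (Hᵀ * A i * H) := by
      rw [Matrix.mul_sum, Matrix.sum_mul]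
      exact Finset.sum_congr rfl fun i _ => by rw [Matrix.mul_smul, Matrix.smul_mul]
    rw [← Matrix.trace_sub, hmat, hsum, Matrix.trace_sum]
    exact Finset.sum_congr rfl fun i _ => by
      rw [Matrix.trace_smul, smul_eq_mul, happ i]
  -- the B difference
  have hB : ∀ j, applyA A (Y₁ * Hᵀ + H * Y₁ᵀ) j - applyA A (Y₂ * Hᵀ + H * Y₂ᵀ) j
      = applyA A (E * Hᵀ + H * Eᵀ) j := by
    intro j
    simp only [applyA]
    rw [← Matrix.trace_sub, ← Matrix.mul_sub]
    congr 2
    rw [hE, Matrix.transpose_sub, Matrix.sub_mul, Matrix.mul_sub]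
    abel
  have hBsum : ∑ j, Dlam j * applyA A (Y₁ * Hᵀ + H * Y₁ᵀ) j
      - ∑ j, Dlam j * applyA A (Y₂ * Hᵀ + H * Y₂ᵀ) j
      = ∑ j, Dlam j * applyA A (E * Hᵀ + H * Eᵀ) j := by
    rw [← Finset.sum_sub_distrib]
    exact Finset.sum_congr rfl fun j _ => by rw [← mul_sub, hB j]
  have key : kktQuadForm A C Yhat Y₁ lam₁ H Dlam Dmu -
      kktQuadForm A C Yhat Y₂ lam₂ H Dlam Dmu
      = (∑ i, (lam₂ i - lam₁ i) * applyA A (H * Hᵀ) i)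
        - 2 * ∑ j, Dlam j * applyA A (E * Hᵀ + H * Eᵀ) j := by
    simp only [kktQuadForm]
    linarith [hT, hBsum]
  rw [key]
  set α := opNormA A with hα_def
  set h := frobNorm H with hh_def
  set e := frobNorm E with he_def
  set u := frobNorm Dmu with hu_def
  set l := Real.sqrt (∑ i, (lam₁ i - lam₂ i) ^ 2) with hl_def
  set k := Real.sqrt (∑ j, Dlam j ^ 2) with hk_def
  set D := Real.sqrt (e ^ 2 + ∑ i, (lam₁ i - lam₂ i) ^ 2) with hD_def
  have hα : 0 ≤ α := opNormA_nonneg A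
  have hh0 : 0 ≤ h := frobNorm_nonneg _
  have he0 : 0 ≤ e := frobNorm_nonneg _
  have hl0 : 0 ≤ l := Real.sqrt_nonneg _
  have hk0 : 0 ≤ k := Real.sqrt_nonneg _
  have hD0 : 0 ≤ D := Real.sqrt_nonneg _
  have hk2 : ∑ j, Dlam j ^ 2 = k ^ 2 := (Real.sq_sqrt (sumSqNonneg _)).symm
  rw [hk2]
  -- bound 1
  have b1 : |∑ i, (lam₂ i - lam₁ i) * applyA A (H * Hᵀ) i| ≤ l * (α * (h * h)) := by
    have h1 := absCS (fun i => lam₂ i - lam₁ i) (fun i => applyA A (H * Hᵀ) i)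
    have h2 : Real.sqrt (∑ i, (lam₂ i - lam₁ i) ^ 2) = l := by
      rw [hl_def]
      congr 1
      exact Finset.sum_congr rfl fun i _ => by ring
    have h3 : Real.sqrt (∑ i, (applyA A (H * Hᵀ) i) ^ 2) ≤ α * frobNorm (H * Hᵀ) :=
      applyA_le A _
    have h4 : frobNorm (H * Hᵀ) ≤ h * h := by
      calc frobNorm (H * Hᵀ) ≤ frobNorm H * frobNorm Hᵀ := frobNorm_mul_le _ _
        _ = h * h := by rw [frobNorm_transpose]
    rw [h2] at h1
    calc |∑ i, (lam₂ i - lam₁ i) * applyA A (H * Hᵀ) i|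
        ≤ l * Real.sqrt (∑ i, (applyA A (H * Hᵀ) i) ^ 2) := h1
      _ ≤ l * (α * (h * h)) := by
          refine mul_le_mul_of_nonneg_left ?_ hl0
          exact h3.trans (mul_le_mul_of_nonneg_left h4 hα)
  -- bound 2
  have b2 : |∑ j, Dlam j * applyA A (E * Hᵀ + H * Eᵀ) j| ≤ k * (α * (2 * e * h)) := by
    have h1 := absCS Dlam (fun j => applyA A (E * Hᵀ + H * Eᵀ) j)
    have h3 : Real.sqrt (∑ j, (applyA A (E * Hᵀ + H * Eᵀ) j) ^ 2)
        ≤ α * frobNorm (E * Hᵀ + H * Eᵀ) := applyA_le A _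
    have h4 : frobNorm (E * Hᵀ + H * Eᵀ) ≤ 2 * e * h := by
      calc frobNorm (E * Hᵀ + H * Eᵀ)
          ≤ frobNorm (E * Hᵀ) + frobNorm (H * Eᵀ) := frobNorm_add_le _ _
        _ ≤ frobNorm E * frobNorm Hᵀ + frobNorm H * frobNorm Eᵀ :=
            add_le_add (frobNorm_mul_le _ _) (frobNorm_mul_le _ _)
        _ = 2 * e * h := by rw [frobNorm_transpose, frobNorm_transpose]; ring
    calc |∑ j, Dlam j * applyA A (E * Hᵀ + H * Eᵀ) j|
        ≤ k * Real.sqrt (∑ j, (applyA A (E * Hᵀ + H * Eᵀ) j) ^ 2) := h1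
      _ ≤ k * (α * (2 * e * h)) := by
          refine mul_le_mul_of_nonneg_left ?_ hk0
          exact h3.trans (mul_le_mul_of_nonneg_left h4 hα)
  have hfinal : |(∑ i, (lam₂ i - lam₁ i) * applyA A (H * Hᵀ) i)
      - 2 * ∑ j, Dlam j * applyA A (E * Hᵀ + H * Eᵀ) j|
      ≤ l * (α * (h * h)) + 2 * (k * (α * (2 * e * h))) := by
    set T := ∑ i, (lam₂ i - lam₁ i) * applyA A (H * Hᵀ) i
    set B := ∑ j, Dlam j * applyA A (E * Hᵀ + H * Eᵀ) j
    calc |T - 2 * B| = |T + -(2 * B)| := by rw [sub_eq_add_neg]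
      _ ≤ |T| + |-(2 * B)| := abs_add_le _ _
      _ = |T| + 2 * |B| := by rw [abs_neg, abs_mul]; norm_num
      _ ≤ l * (α * (h * h)) + 2 * (k * (α * (2 * e * h))) := by
          have := b2
          linarith [b1, b2]
  -- comparisons with D
  have hlD : l ≤ D := by
    rw [hl_def, hD_def]
    exact Real.sqrt_le_sqrt (by nlinarith [sq_nonneg e])
  have heD : e ≤ D := by
    rw [hD_def]
    calc e = Real.sqrt (e ^ 2) := (Real.sqrt_sq he0).symm
      _ ≤ _ := Real.sqrt_le_sqrt (le_add_of_nonneg_right (sumSqNonneg _))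
  have hs3 : (1 : ℝ) ≤ Real.sqrt 3 := by
    rw [show (1 : ℝ) = Real.sqrt 1 by simp]
    exact Real.sqrt_le_sqrt (by norm_num)
  have hu2 : 0 ≤ u ^ 2 := sq_nonneg _
  have t1 : 0 ≤ α * (D - l) * h ^ 2 :=
    mul_nonneg (mul_nonneg hα (by linarith)) (sq_nonneg _)
  have t2 : 0 ≤ α * D * (k ^ 2 + u ^ 2) :=
    mul_nonneg (mul_nonneg hα hD0) (by positivity)
  have t3 : 0 ≤ α * D * (h - k) ^ 2 :=
    mul_nonneg (mul_nonneg hα hD0) (sq_nonneg _)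
  have t4 : 0 ≤ α * D * u ^ 2 := mul_nonneg (mul_nonneg hα hD0) hu2
  have t5 : 0 ≤ α * k * h * (D - e) :=
    mul_nonneg (mul_nonneg (mul_nonneg hα hk0) hh0) (by linarith)
  have hS : 0 ≤ h ^ 2 + k ^ 2 + u ^ 2 := by positivity
  have t6 : 0 ≤ (Real.sqrt 3 * 12 - 3) * (α * D * (h ^ 2 + k ^ 2 + u ^ 2)) :=
    mul_nonneg (by linarith) (mul_nonneg (mul_nonneg hα hD0) hS)
  nlinarith [hfinal, t1, t2, t3, t4, t5, t6]
end
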